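/- The weak classical negation of a first-order formula is definable in inclusion logic: for any first-order formula α(𝗑) and any nonempty team X, M ⊭_X α(𝗑) if and only if M ⊨_X ∃𝗒(𝗒 ⊆ 𝗑 ∧ ¬α(𝗒/𝗑)), where 𝗒 is a sequence of fresh variables. -/

import Mathlib

namespace TeamSem

variable {M : Type}

/-- A team is a set of assignments (variables are natural numbers). -/
abbrev Team (M : Type) := Set (ℕ → M)

/-- Lax existential extension of a team `X` along variable `x` by a choice function `F`. -/
def extT (X : Team M) (x : ℕ) (F : (ℕ → M) → Set M) : Team M :=
  {t | ∃ s ∈ X, ∃ a ∈ F s, t = Function.update s x a}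

/-- Universal extension of a team `X` along variable `x`. -/
def extAll (X : Team M) (x : ℕ) : Team M :=
  {t | ∃ s ∈ X, ∃ a : M, t = Function.update s x a}

/-- First-order formulas with semantic atoms depending on a finite list of variables. -/
inductive FOForm (M : Type) where
  | atom : List ℕ → (List M → Prop) → FOForm M
  | neg  : FOForm M → FOForm M
  | and  : FOForm M → FOForm M → FOForm M
  | or   : FOForm M → FOForm M → FOForm M
  | ex   : ℕ → FOForm M → FOForm M
  | all  : ℕ → FOForm M → FOForm M

/-- Tarskian (single-assignment) satisfaction for first-order formulas. -/
def FOForm.sat : FOForm M → (ℕ → M) → Prop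
  | .atom l p, s => p (l.map s)
  | .neg φ, s => ¬ FOForm.sat φ s
  | .and φ ψ, s => FOForm.sat φ s ∧ FOForm.sat ψ s
  | .or φ ψ, s => FOForm.sat φ s ∨ FOForm.sat ψ s
  | .ex x φ, s => ∃ a : M, FOForm.sat φ (Function.update s x a)
  | .all x φ, s => ∀ a : M, FOForm.sat φ (Function.update s x a)

/-- Free variables of a first-order formula. -/
def FOForm.fv : FOForm M → Set ℕ
  | .atom l _ => {v | v ∈ l}
  | .neg φ => FOForm.fv φ
  | .and φ ψ => FOForm.fv φ ∪ FOForm.fv ψ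
  | .or φ ψ => FOForm.fv φ ∪ FOForm.fv ψ
  | .ex x φ => FOForm.fv φ \ {x}
  | .all x φ => FOForm.fv φ \ {x}

/-- Formulas of inclusion logic: first-order formulas (with negation applied
only to first-order formulas), inclusion atoms, ∧, ∨, ∃, ∀. -/
inductive IncForm (M : Type) where
  | fo   : FOForm M → IncForm M
  | incl : List ℕ → List ℕ → IncForm M
  | and  : IncForm M → IncForm M → IncForm M
  | or   : IncForm M → IncForm M → IncForm M
  | ex   : ℕ → IncForm M → IncForm M
  | all  : ℕ → IncForm M → IncForm M

/-- Lax team semantics for inclusion logic. -/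
def IncForm.tsat : IncForm M → Team M → Prop
  | .fo α, X => ∀ s ∈ X, FOForm.sat α s
  | .incl xs ys, X => ∀ s ∈ X, ∃ s' ∈ X, xs.map s = ys.map s'
  | .and φ ψ, X => IncForm.tsat φ X ∧ IncForm.tsat ψ X
  | .or φ ψ, X => ∃ Y Z : Team M, X = Y ∪ Z ∧ IncForm.tsat φ Y ∧ IncForm.tsat ψ Z
  | .ex x φ, X => ∃ F : (ℕ → M) → Set M, (∀ s ∈ X, (F s).Nonempty) ∧
      IncForm.tsat φ (extT X x F)
  | .all x φ, X => IncForm.tsat φ (extAll X x)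

/-- Free variables of an inclusion logic formula. -/
def IncForm.fv : IncForm M → Set ℕ
  | .fo α => FOForm.fv α
  | .incl xs ys => {v | v ∈ xs ∨ v ∈ ys}
  | .and φ ψ => IncForm.fv φ ∪ IncForm.fv ψ
  | .or φ ψ => IncForm.fv φ ∪ IncForm.fv ψ
  | .ex x φ => IncForm.fv φ \ {x}
  | .all x φ => IncForm.fv φ \ {x}

/-- A block of existential quantifiers. -/
def IncForm.exs (l : List ℕ) (φ : IncForm M) : IncForm M := l.foldr IncForm.ex φ

/-- A block of universal quantifiers. -/
def IncForm.alls (l : List ℕ) (φ : IncForm M) : IncForm M := l.foldr IncForm.all φ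

/-!
If some `s₀ ∈ X` falsifies `α(𝗑)`, give the fresh variables `𝗒` the constant values `s₀(𝗑)`:
then `¬α(𝗒/𝗑)` holds everywhere, and `𝗒 ⊆ 𝗑` holds because the extension of `s₀` itself
realises these values on `𝗑`. Conversely, in any team witnessing the existential the
inclusion atom moves the `𝗒`-values of an assignment to the `𝗑`-values of one that agrees
with some `s ∈ X` off `𝗒`; so if `α` held on `X`, `α(𝗒/𝗑)` would hold somewhere.
-/

theorem _root_.Finset.piecewise_update_self {ι β : Type*} [DecidableEq ι] (s : Finset ι) (f g : ι → β)
    (i : ι) : s.piecewise f (Function.update g i (f i)) = (insert i s).piecewise f g := by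
  rw [Finset.piecewise_insert, Finset.update_piecewise, Function.update_eq_self]

theorem _root_.List.map_getD_idxOf {α β : Type*} [DecidableEq α] {y : List α} {x : List β} (d : β)
    (hy : y.Nodup) (hlen : y.length = x.length) :
    y.map (fun v => x.getD (y.idxOf v) d) = x := by
  refine List.ext_getElem (by simp [hlen]) fun i hi _ => ?_
  rw [List.getElem_map, hy.idxOf_getElem, List.getD_eq_getElem]

namespace IncForm

theorem extT_const (X : Team M) (a : ℕ) (c : M) :
    extT X a (fun _ => {c}) = (Function.update · a c) '' X := by
  ext t
  simp [extT, eq_comm]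

theorem tsat_ex_of_tsat_image_update {φ : IncForm M} {X : Team M} {a : ℕ} (c : M)
    (h : φ.tsat ((Function.update · a c) '' X)) : (ex a φ).tsat X :=
  ⟨fun _ => {c}, fun _ _ => Set.singleton_nonempty c, by rwa [extT_const]⟩

theorem tsat_exs_of_tsat_image_piecewise {φ : IncForm M} (y : List ℕ) (g : ℕ → M)
    {X : Team M} (h : φ.tsat ((fun s => y.toFinset.piecewise g s) '' X)) :
    (exs y φ).tsat X := by
  induction y generalizing X with
  | nil =>
    have hid : (fun s => ([] : List ℕ).toFinset.piecewise g s) = id :=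
      funext fun s => funext fun v => Finset.piecewise_eq_of_notMem _ _ _ (by simp)
    rwa [hid, Set.image_id] at h
  | cons a y ih =>
    have hcomp : (fun s => y.toFinset.piecewise g s) ∘ (Function.update · a (g a)) =
        fun s => (a :: y).toFinset.piecewise g s := by
      funext s
      rw [Function.comp_apply, Finset.piecewise_update_self]
      congr
      exact List.toFinset_cons.symm
    refine tsat_ex_of_tsat_image_update (g a) (ih ?_)
    rwa [← Set.image_comp, hcomp]

theorem exists_of_tsat_exs {φ : IncForm M} {y : List ℕ} {X : Team M} (h : (exs y φ).tsat X)
    (hX : X.Nonempty) :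
    ∃ Y : Team M, Y.Nonempty ∧ φ.tsat Y ∧ ∀ t ∈ Y, ∃ s ∈ X, ∀ v ∉ y, t v = s v := by
  induction y generalizing X with
  | nil => exact ⟨X, hX, h, fun t ht => ⟨t, ht, fun _ _ => rfl⟩⟩
  | cons a y ih =>
    obtain ⟨F, hF, hsat⟩ := h
    have hext : (extT X a F).Nonempty := by
      obtain ⟨s, hs⟩ := hX
      obtain ⟨b, hb⟩ := hF s hs
      exact ⟨_, s, hs, b, hb, rfl⟩
    obtain ⟨Y, hY, hφ, hagree⟩ := ih hsat hext
    refine ⟨Y, hY, hφ, fun t ht => ?_⟩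
    obtain ⟨_, ⟨s, hs, b, -, rfl⟩, hts⟩ := hagree t ht
    refine ⟨s, hs, fun v hv => ?_⟩
    rw [List.mem_cons, not_or] at hv
    rw [hts v hv.2, Function.update_of_ne hv.1]

end IncForm

/-- The first-order formula `α(𝗑)`, whose free variables are among `𝗑`, is rendered as an atom
with variable list `𝗑` and predicate `p`; the substitution `α(𝗒/𝗑)` is then the atom with
variable list `𝗒`. -/
theorem weak_negation_definable (x y : List ℕ) (p : List M → Prop) (X : Team M)
    (hX : X.Nonempty)
    (hlen : y.length = x.length) (hynd : y.Nodup)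
    (hyx : ∀ v ∈ y, v ∉ x) :
    ¬ IncForm.tsat (.fo (.atom x p)) X ↔
      IncForm.tsat (IncForm.exs y
        (.and (.incl y x) (.fo (.neg (.atom y p))))) X := by
  constructor
  · intro hfail
    obtain ⟨s₀, hs₀, hp⟩ : ∃ s₀ ∈ X, ¬ p (x.map s₀) := by
      simpa [IncForm.tsat, FOForm.sat] using hfail
    -- `g` copies the values of `s₀` on `x` onto the fresh variables `y`.
    set g : ℕ → M := fun v => s₀ (x.getD (y.idxOf v) 0)
    have hy s : y.map (y.toFinset.piecewise g s) = x.map s₀ := by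
      rw [← List.map_getD_idxOf 0 hynd hlen, List.map_map]
      exact List.map_congr_left fun v hv => Finset.piecewise_eq_of_mem _ _ _ (List.mem_toFinset.mpr hv)
    have hx s : x.map (y.toFinset.piecewise g s) = x.map s :=
      List.map_congr_left fun v hv =>
        Finset.piecewise_eq_of_notMem _ _ _ fun h => hyx v (List.mem_toFinset.mp h) hv
    refine IncForm.tsat_exs_of_tsat_image_piecewise y g ⟨?_, ?_⟩
    · rintro _ ⟨s, -, rfl⟩
      exact ⟨_, ⟨s₀, hs₀, rfl⟩, by rw [hy, hx]⟩
    · rintro _ ⟨s, -, rfl⟩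
      simpa [FOForm.sat, hy] using hp
  · intro hsat hatom
    obtain ⟨Y, ⟨t, ht⟩, ⟨hincl, hneg⟩, hagree⟩ := IncForm.exists_of_tsat_exs hsat hX
    obtain ⟨t', ht', htt'⟩ := hincl t ht
    obtain ⟨s, hs, ht's⟩ := hagree t' ht'
    have hxs : x.map t' = x.map s :=
      List.map_congr_left fun v hv => ht's v fun h => hyx v h hv
    exact hneg t ht (show p (y.map t) by rw [htt', hxs]; exact hatom s hs)

end TeamSem
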